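/- arXiv:1405.0856 — 6 statements merged into one kernel-verified Lean document; each statement's English description precedes it below -/
import Mathlib

section
/- Let T : C → C be nonexpansive on a nonempty closed convex subset C of a real Hilbert space with Fix(T) ≠ ∅. Then I − T is demiclosed at 0: if (xₙ) ⊆ C converges weakly to p and xₙ − Txₙ → 0 strongly, then p ∈ Fix(T). -/
/-!
Weak limits of sequences in a closed convex set stay in the set: if `q` is the metric projection
of `p` onto `C`, then `⟪p - q, xₙ - q⟫ ≤ 0`, while the left side tends to `‖p - q‖²`.
For the fixed-point property, nonexpansiveness gives `‖xₙ - T p‖ ≤ ‖xₙ - T xₙ‖ + ‖xₙ - p‖`;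
expanding `‖xₙ - T p‖² = ‖xₙ - p‖² + 2⟪xₙ - p, p - T p⟫ + ‖p - T p‖²` and using that a weakly
convergent sequence is bounded, the limit yields `‖p - T p‖² ≤ 0`.
-/

open Filter Topology RealInnerProductSpace

section

variable {H : Type*} [NormedAddCommGroup H] [InnerProductSpace ℝ H]

theorem Convex.mem_of_tendsto_inner_sub [CompleteSpace H] {C : Set H} (hCc : IsClosed C)
    (hCv : Convex ℝ C) {x : ℕ → H} (hxC : ∀ n, x n ∈ C) {p : H}
    (hweak : ∀ y : H, Tendsto (fun n => ⟪x n - p, y⟫) atTop (𝓝 0)) : p ∈ C := by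
  obtain ⟨q, hqC, hq⟩ :=
    exists_norm_eq_iInf_of_complete_convex ⟨x 0, hxC 0⟩ hCc.isComplete hCv p
  have hproj : ∀ w ∈ C, ⟪p - q, w - q⟫ ≤ 0 :=
    (norm_eq_iInf_iff_real_inner_le_zero hCv hqC).1 hq
  have hsplit : ∀ n, ⟪p - q, x n - q⟫ = ⟪x n - p, p - q⟫ + ‖p - q‖ ^ 2 := fun n => by
    rw [real_inner_comm, ← sub_add_sub_cancel (x n) p q, inner_add_left,
      real_inner_self_eq_norm_sq]
  have hlim : Tendsto (fun n => ⟪p - q, x n - q⟫) atTop (𝓝 (‖p - q‖ ^ 2)) := by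
    simpa only [hsplit, zero_add] using (hweak (p - q)).add_const (‖p - q‖ ^ 2)
  have hpq : ‖p - q‖ ^ 2 ≤ 0 := le_of_tendsto' hlim fun n => hproj _ (hxC n)
  rwa [sub_eq_zero.1 (norm_eq_zero.1 (pow_eq_zero_iff two_ne_zero |>.1
    (le_antisymm hpq (sq_nonneg _))))]

theorem exists_norm_sub_le_of_tendsto_inner_sub [CompleteSpace H] {x : ℕ → H} {p : H}
    (hweak : ∀ y : H, Tendsto (fun n => ⟪x n - p, y⟫) atTop (𝓝 0)) :
    ∃ M, ∀ n, ‖x n - p‖ ≤ M := by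
  obtain ⟨M, hM⟩ := banach_steinhaus (g := fun n => innerSL ℝ (x n - p)) fun y => by
    obtain ⟨B, hB⟩ := (hweak y).norm.bddAbove_range
    exact ⟨B, fun n => hB (Set.mem_range_self n)⟩
  exact ⟨M, fun n => innerSL_apply_norm (𝕜 := ℝ) (x n - p) ▸ hM n⟩

theorem sq_norm_sub_add_two_inner_le {x p u v : H} (huv : ‖u - v‖ ≤ ‖x - p‖) :
    ‖p - v‖ ^ 2 + 2 * ⟪x - p, p - v⟫ ≤ ‖x - u‖ ^ 2 + 2 * ‖x - u‖ * ‖x - p‖ := by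
  have htri : ‖x - v‖ ≤ ‖x - u‖ + ‖x - p‖ :=
    (norm_sub_le_norm_sub_add_norm_sub x u v).trans (by gcongr)
  have hexpand : ‖x - v‖ ^ 2 = ‖x - p‖ ^ 2 + 2 * ⟪x - p, p - v⟫ + ‖p - v‖ ^ 2 := by
    rw [← sub_add_sub_cancel x p v, norm_add_sq_real]
  have hsq : ‖x - v‖ ^ 2 ≤ (‖x - u‖ + ‖x - p‖) ^ 2 := by gcongr
  nlinarith

end

theorem stmt_4_general {H : Type*} [NormedAddCommGroup H] [InnerProductSpace ℝ H] [CompleteSpace H]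
    (C : Set H) (hCc : IsClosed C) (hCv : Convex ℝ C)
    (T : H → H)
    (hne : ∀ x ∈ C, ∀ y ∈ C, ‖T x - T y‖ ≤ ‖x - y‖)
    (x : ℕ → H) (hxC : ∀ n, x n ∈ C) (p : H)
    (hweak : ∀ y : H, Filter.Tendsto (fun n => (inner ℝ (x n - p) y : ℝ)) Filter.atTop (nhds 0))
    (hstrong : Filter.Tendsto (fun n => x n - T (x n)) Filter.atTop (nhds 0)) :
    p ∈ C ∧ T p = p := by
  have hpC : p ∈ C := hCv.mem_of_tendsto_inner_sub hCc hxC hweak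
  refine ⟨hpC, ?_⟩
  obtain ⟨M, hM⟩ := exists_norm_sub_le_of_tendsto_inner_sub hweak
  have hε : Tendsto (fun n => ‖x n - T (x n)‖) atTop (𝓝 0) := by simpa using hstrong.norm
  have hlhs : Tendsto (fun n => ‖p - T p‖ ^ 2 + 2 * ⟪x n - p, p - T p⟫) atTop
      (𝓝 (‖p - T p‖ ^ 2)) := by
    simpa using tendsto_const_nhds.add ((hweak (p - T p)).const_mul 2)
  have hrhs : Tendsto (fun n => ‖x n - T (x n)‖ ^ 2 + 2 * ‖x n - T (x n)‖ * M) atTop (𝓝 0) := by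
    simpa using (hε.pow 2).add ((hε.const_mul 2).mul_const M)
  have hle : ‖p - T p‖ ^ 2 ≤ 0 := le_of_tendsto_of_tendsto' hlhs hrhs fun n =>
    (sq_norm_sub_add_two_inner_le (hne _ (hxC n) _ hpC)).trans (by gcongr; exact hM n)
  have hzero : ‖p - T p‖ = 0 := pow_eq_zero_iff two_ne_zero |>.1 (le_antisymm hle (sq_nonneg _))
  exact (sub_eq_zero.1 (norm_eq_zero.1 hzero)).symm

theorem stmt_4 {H : Type*} [NormedAddCommGroup H] [InnerProductSpace ℝ H] [CompleteSpace H]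
    (C : Set H) (hC : C.Nonempty) (hCc : IsClosed C) (hCv : Convex ℝ C)
    (T : H → H) (hT : Set.MapsTo T C C)
    (hne : ∀ x ∈ C, ∀ y ∈ C, ‖T x - T y‖ ≤ ‖x - y‖)
    (hFix : ∃ z ∈ C, T z = z)
    (x : ℕ → H) (hxC : ∀ n, x n ∈ C) (p : H)
    (hweak : ∀ y : H, Filter.Tendsto (fun n => (inner ℝ (x n - p) y : ℝ)) Filter.atTop (nhds 0))
    (hstrong : Filter.Tendsto (fun n => x n - T (x n)) Filter.atTop (nhds 0)) :
    p ∈ C ∧ T p = p :=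
  stmt_4_general C hCc hCv T hne x hxC p hweak hstrong
end

section
/- Let S : C → C be a nonspreading mapping on a nonempty closed convex subset C of a real Hilbert space with Fix(S) ≠ ∅. Then I − S is demiclosed at 0: if xₙ ⇀ p weakly and xₙ − Sxₙ → 0 strongly, then p ∈ Fix(S). -/
/-!
A weak limit of points of a closed convex set stays in the set (closed convex sets are weakly
closed), so `p ∈ C`. The nonspreading inequality at `(xₙ, p)` expands to
`‖p - S p‖² ≤ -2⟪xₙ - p, p - S p⟫ - 4⟪S xₙ - xₙ, p - S p⟫ - 2⟪xₙ - p, S xₙ - xₙ⟫`.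
The first term tends to `0` by weak convergence, the second since `S xₙ - xₙ → 0`, and the
third because weakly convergent sequences are bounded (Banach–Steinhaus). Hence `p = S p`.
-/

open Filter Topology

theorem Convex.mem_of_forall_tendsto_dual {E ι : Type*} [NormedAddCommGroup E] [NormedSpace ℝ E]
    {l : Filter ι} [l.NeBot] {s : Set E}
    (hs : Convex ℝ s) (hsc : IsClosed s) {x : ι → E} (hx : ∀ i, x i ∈ s) {p : E}
    (hlim : ∀ f : StrongDual ℝ E, Tendsto (fun i => f (x i)) l (𝓝 (f p))) : p ∈ s := by
  have hweak : Tendsto (fun i => toWeakSpace ℝ E (x i)) l (𝓝 (toWeakSpace ℝ E p)) :=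
    (WeakBilin.tendsto_iff_forall_eval_tendsto _
      (separatingDual_iff_injective.1 inferInstance)).2 hlim
  have hmem : toWeakSpace ℝ E p ∈ closure (toWeakSpace ℝ E '' s) :=
    mem_closure_of_tendsto hweak (Eventually.of_forall fun i => ⟨x i, hx i, rfl⟩)
  rw [← hs.toWeakSpace_closure ℝ, hsc.closure_eq] at hmem
  obtain ⟨y, hy, hyp⟩ := hmem
  exact (toWeakSpace ℝ E).injective hyp ▸ hy

section Hilbert

variable {H : Type*} [NormedAddCommGroup H] [InnerProductSpace ℝ H]

theorem tendsto_dual_of_forall_tendsto_inner [CompleteSpace H] {ι : Type*} {l : Filter ι}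
    {x : ι → H} {p : H} (hx : ∀ y, Tendsto (fun i => inner ℝ (x i - p) y) l (𝓝 0))
    (f : StrongDual ℝ H) : Tendsto (fun i => f (x i)) l (𝓝 (f p)) := by
  have hf : ∀ z, f z = inner ℝ z ((InnerProductSpace.toDual ℝ H).symm f) := fun z => by
    rw [real_inner_comm, InnerProductSpace.toDual_symm_apply]
  simpa [hf, inner_sub_left] using
    (hx ((InnerProductSpace.toDual ℝ H).symm f)).add_const (f p)

theorem exists_norm_sub_le_of_forall_tendsto_inner [CompleteSpace H] {x : ℕ → H} {p : H}
    (hx : ∀ y, Tendsto (fun n => inner ℝ (x n - p) y) atTop (𝓝 0)) :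
    ∃ M, ∀ n, ‖x n - p‖ ≤ M := by
  obtain ⟨M, hM⟩ := banach_steinhaus (g := fun n => innerSL ℝ (x n - p)) fun y => by
    obtain ⟨c, hc⟩ := (hx y).norm.bddAbove_range
    exact ⟨c, fun n => hc ⟨n, rfl⟩⟩
  exact ⟨M, fun n => by simpa only [innerSL_apply_norm] using hM n⟩

theorem tendsto_inner_zero_of_norm_le_of_tendsto_zero {ι : Type*} {l : Filter ι} {u v : ι → H}
    {M : ℝ} (hu : ∀ i, ‖u i‖ ≤ M) (hv : Tendsto v l (𝓝 0)) :
    Tendsto (fun i => inner ℝ (u i) (v i)) l (𝓝 0) := by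
  refine squeeze_zero_norm (fun i => ?_) (by simpa using hv.norm.const_mul M)
  calc ‖inner ℝ (u i) (v i)‖ ≤ ‖u i‖ * ‖v i‖ := norm_inner_le_norm _ _
    _ ≤ M * ‖v i‖ := by gcongr; exact hu i

theorem sq_norm_sub_le_of_nonspreading {S : H → H} {x p : H}
    (h : 2 * ‖S x - S p‖ ^ 2 ≤ ‖S x - p‖ ^ 2 + ‖x - S p‖ ^ 2) :
    ‖p - S p‖ ^ 2 ≤ -2 * inner ℝ (x - p) (p - S p) - 4 * inner ℝ (S x - x) (p - S p)
      - 2 * inner ℝ (x - p) (S x - x) := by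
  have he := real_inner_self_nonneg (x := S x - x)
  simp only [← real_inner_self_eq_norm_sq, inner_sub_left, inner_sub_right] at h he ⊢
  linarith [real_inner_comm x (S x), real_inner_comm x p, real_inner_comm x (S p),
    real_inner_comm (S x) p, real_inner_comm (S x) (S p), real_inner_comm p (S p)]

end Hilbert

theorem stmt_5_general {H : Type*} [NormedAddCommGroup H] [InnerProductSpace ℝ H] [CompleteSpace H]
    (C : Set H) (hCc : IsClosed C) (hCv : Convex ℝ C)
    (S : H → H)
    (hns : ∀ x ∈ C, ∀ y ∈ C, 2 * ‖S x - S y‖ ^ 2 ≤ ‖S x - y‖ ^ 2 + ‖x - S y‖ ^ 2)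
    (x : ℕ → H) (hxC : ∀ n, x n ∈ C) (p : H)
    (hweak : ∀ y : H, Filter.Tendsto (fun n => (inner ℝ (x n - p) y : ℝ)) Filter.atTop (nhds 0))
    (hstrong : Filter.Tendsto (fun n => x n - S (x n)) Filter.atTop (nhds 0)) :
    p ∈ C ∧ S p = p := by
  have hpC : p ∈ C :=
    hCv.mem_of_forall_tendsto_dual hCc hxC (tendsto_dual_of_forall_tendsto_inner hweak)
  obtain ⟨M, hM⟩ := exists_norm_sub_le_of_forall_tendsto_inner hweak
  have he : Tendsto (fun n => S (x n) - x n) atTop (𝓝 0) := by simpa using hstrong.neg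
  have hrhs : Tendsto (fun n => -2 * inner ℝ (x n - p) (p - S p)
      - 4 * inner ℝ (S (x n) - x n) (p - S p) - 2 * inner ℝ (x n - p) (S (x n) - x n))
      atTop (𝓝 0) := by
    have hw := hweak (p - S p)
    have hew := he.inner (𝕜 := ℝ) (tendsto_const_nhds (x := p - S p))
    have hde := tendsto_inner_zero_of_norm_le_of_tendsto_zero hM he
    simpa using ((hw.const_mul (-2)).sub (hew.const_mul 4)).sub (hde.const_mul 2)
  have hsq : ‖p - S p‖ ^ 2 ≤ 0 :=
    ge_of_tendsto' hrhs fun n => sq_norm_sub_le_of_nonspreading (hns _ (hxC n) p hpC)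
  refine ⟨hpC, (sub_eq_zero.1 ?_).symm⟩
  simpa using hsq.antisymm (sq_nonneg _)

theorem stmt_5 {H : Type*} [NormedAddCommGroup H] [InnerProductSpace ℝ H] [CompleteSpace H]
    (C : Set H) (hC : C.Nonempty) (hCc : IsClosed C) (hCv : Convex ℝ C)
    (S : H → H) (hS : Set.MapsTo S C C)
    (hns : ∀ x ∈ C, ∀ y ∈ C, 2 * ‖S x - S y‖ ^ 2 ≤ ‖S x - y‖ ^ 2 + ‖x - S y‖ ^ 2)
    (hFix : ∃ z ∈ C, S z = z)
    (x : ℕ → H) (hxC : ∀ n, x n ∈ C) (p : H)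
    (hweak : ∀ y : H, Filter.Tendsto (fun n => (inner ℝ (x n - p) y : ℝ)) Filter.atTop (nhds 0))
    (hstrong : Filter.Tendsto (fun n => x n - S (x n)) Filter.atTop (nhds 0)) :
    p ∈ C ∧ S p = p :=
  stmt_5_general C hCc hCv S hns x hxC p hweak hstrong
end

section
/- Let S : C → C be nonspreading on a nonempty closed convex subset C of a real Hilbert space and δ ∈ (0,1). Then for the averaged type mapping A_S = (1−δ)I + δS and all x,y ∈ C: ‖A_Sx−A_Sy‖² ≤ ‖x−y‖² + (2/δ)⟨x−A_Sx, y−A_Sy⟩ − (1−δ)‖(x−A_Sx)−(y−A_Sy)‖². -/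
open RealInnerProductSpace

section AveragedMap

variable {H : Type*} [NormedAddCommGroup H] [InnerProductSpace ℝ H]

/-- Writing `z = x - y` and `u, v` for the displacements `x - S x, y - S y`: the nonspreading
inequality, multiplied by `δ`, dominates the claim because `δ² + (1 - δ) δ² ≤ δ`, i.e. `(1 - δ)² ≥ 0`. -/
theorem norm_sub_smul_sub_sq_le_of_nonspreading {z u v : H} {δ : ℝ} (hδ : 0 < δ)
    (h : ‖z - (u - v)‖ ^ 2 ≤ ‖z‖ ^ 2 + 2 * ⟪u, v⟫) :
    ‖z - δ • (u - v)‖ ^ 2 ≤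
      ‖z‖ ^ 2 + (2 / δ) * ⟪δ • u, δ • v⟫ - (1 - δ) * ‖δ • u - δ • v‖ ^ 2 := by
  rw [norm_sub_sq_real] at h
  rw [norm_sub_sq_real, ← smul_sub, norm_smul, Real.norm_of_nonneg hδ.le, real_inner_smul_left,
    real_inner_smul_right, real_inner_smul_right]
  have h_inner : (2 / δ) * (δ * (δ * ⟪u, v⟫)) = δ * (2 * ⟪u, v⟫) := by field_simp
  rw [h_inner]
  nlinarith [mul_le_mul_of_nonneg_left h hδ.le,
    mul_nonneg (mul_nonneg hδ.le (sq_nonneg (1 - δ))) (sq_nonneg ‖u - v‖)]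

theorem norm_averaged_sub_sq_le_of_nonspreading {x y Sx Sy Ax Ay : H} {δ : ℝ} (hδ : 0 < δ)
    (h : ‖Sx - Sy‖ ^ 2 ≤ ‖x - y‖ ^ 2 + 2 * ⟪x - Sx, y - Sy⟫)
    (hAx : Ax = (1 - δ) • x + δ • Sx) (hAy : Ay = (1 - δ) • y + δ • Sy) :
    ‖Ax - Ay‖ ^ 2 ≤
      ‖x - y‖ ^ 2 + (2 / δ) * ⟪x - Ax, y - Ay⟫ - (1 - δ) * ‖(x - Ax) - (y - Ay)‖ ^ 2 := by
  have hx : x - Ax = δ • (x - Sx) := by rw [hAx]; module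
  have hy : y - Ay = δ • (y - Sy) := by rw [hAy]; module
  have hxy : Ax - Ay = (x - y) - δ • ((x - Sx) - (y - Sy)) := by rw [hAx, hAy]; module
  have hSxy : Sx - Sy = (x - y) - ((x - Sx) - (y - Sy)) := by abel
  rw [hSxy] at h
  rw [hxy, hx, hy]
  exact norm_sub_smul_sub_sq_le_of_nonspreading hδ h

end AveragedMap

theorem stmt_9_general {H : Type*} [NormedAddCommGroup H] [InnerProductSpace ℝ H]
    (C : Set H)
    (S : H → H)
    (hns : ∀ x ∈ C, ∀ y ∈ C,
      ‖S x - S y‖ ^ 2 ≤ ‖x - y‖ ^ 2 + 2 * inner ℝ (x - S x) (y - S y))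
    (δ : ℝ) (hδ : δ ∈ Set.Ioo (0 : ℝ) 1)
    (A : H → H) (hA : ∀ x, A x = (1 - δ) • x + δ • S x) :
    ∀ x ∈ C, ∀ y ∈ C,
      ‖A x - A y‖ ^ 2 ≤ ‖x - y‖ ^ 2 + (2 / δ) * inner ℝ (x - A x) (y - A y)
        - (1 - δ) * ‖(x - A x) - (y - A y)‖ ^ 2 := by
  intro x hx y hy
  exact norm_averaged_sub_sq_le_of_nonspreading hδ.1 (hns x hx y hy) (hA x) (hA y)

theorem stmt_9 {H : Type*} [NormedAddCommGroup H] [InnerProductSpace ℝ H]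
    (C : Set H) (hC : C.Nonempty) (hCc : IsClosed C) (hCv : Convex ℝ C)
    (S : H → H) (hS : Set.MapsTo S C C)
    (hns : ∀ x ∈ C, ∀ y ∈ C,
      ‖S x - S y‖ ^ 2 ≤ ‖x - y‖ ^ 2 + 2 * inner ℝ (x - S x) (y - S y))
    (δ : ℝ) (hδ : δ ∈ Set.Ioo (0 : ℝ) 1)
    (A : H → H) (hA : ∀ x, A x = (1 - δ) • x + δ • S x) :
    ∀ x ∈ C, ∀ y ∈ C,
      ‖A x - A y‖ ^ 2 ≤ ‖x - y‖ ^ 2 + (2 / δ) * inner ℝ (x - A x) (y - A y)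
        - (1 - δ) * ‖(x - A x) - (y - A y)‖ ^ 2 :=
  stmt_9_general C S hns δ hδ A hA
end

section
/- Let S : C → C be nonspreading with Fix(S) ≠ ∅, δ ∈ (0,1), A_S = (1−δ)I + δS. Then A_S is quasi-firmly type nonexpansive with coefficient 1−δ: ‖A_Sx − p‖² ≤ ‖x − p‖² − (1−δ)‖x − A_Sx‖² for all x ∈ C, p ∈ Fix(S). -/
/-!
Put `a = x - p` and `b = S x - p`. Taking `y = p` in the nonspreading inequality gives
`‖b‖ ≤ ‖a‖`, i.e. `S` is quasi-nonexpansive. In a Hilbert space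
`‖(1 - δ) a + δ b‖² = (1 - δ)‖a‖² + δ‖b‖² - δ(1 - δ)‖a - b‖²`, while `x - A x = δ (a - b)`.
So it remains to see `δ (1 - δ) ≥ δ² (1 - δ)`, the difference being `δ (1 - δ)²`.
-/

section

variable {H : Type*}

lemma norm_sub_fixed_le_of_nonspreading [SeminormedAddCommGroup H] {C : Set H} {S : H → H}
    (hns : ∀ x ∈ C, ∀ y ∈ C, 2 * ‖S x - S y‖ ^ 2 ≤ ‖S x - y‖ ^ 2 + ‖x - S y‖ ^ 2)
    {x p : H} (hx : x ∈ C) (hp : p ∈ C) (hSp : S p = p) :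
    ‖S x - p‖ ≤ ‖x - p‖ := by
  have h := hns x hx p hp
  rw [hSp] at h
  exact (pow_le_pow_iff_left₀ (norm_nonneg _) (norm_nonneg _) two_ne_zero).mp (by linarith)

variable [NormedAddCommGroup H] [InnerProductSpace ℝ H]

lemma norm_one_sub_smul_add_smul_sq (a b : H) (t : ℝ) :
    ‖(1 - t) • a + t • b‖ ^ 2 =
      (1 - t) * ‖a‖ ^ 2 + t * ‖b‖ ^ 2 - t * (1 - t) * ‖a - b‖ ^ 2 := by
  rw [norm_add_sq_real, norm_sub_sq_real, norm_smul, norm_smul, real_inner_smul_left,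
    real_inner_smul_right, mul_pow, mul_pow, Real.norm_eq_abs, Real.norm_eq_abs, sq_abs, sq_abs]
  ring

lemma norm_one_sub_smul_add_smul_sub_sq_le {x u p : H} (hu : ‖u - p‖ ≤ ‖x - p‖) {δ : ℝ}
    (hδ : 0 ≤ δ) :
    ‖((1 - δ) • x + δ • u) - p‖ ^ 2 ≤
      ‖x - p‖ ^ 2 - (1 - δ) * ‖x - ((1 - δ) • x + δ • u)‖ ^ 2 := by
  have hcomb : (1 - δ) • x + δ • u - p = (1 - δ) • (x - p) + δ • (u - p) := by
    simp only [smul_sub, sub_smul, one_smul]; abel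
  have hstep : x - ((1 - δ) • x + δ • u) = δ • ((x - p) - (u - p)) := by
    simp only [smul_sub, sub_smul, one_smul]; abel
  have hu_sq : ‖u - p‖ ^ 2 ≤ ‖x - p‖ ^ 2 := by gcongr
  have hcoeff : δ ^ 2 * (1 - δ) ≤ δ * (1 - δ) := by
    nlinarith [mul_nonneg hδ (sq_nonneg (1 - δ))]
  rw [hcomb, hstep, norm_one_sub_smul_add_smul_sq, norm_smul, mul_pow, Real.norm_eq_abs, sq_abs]
  nlinarith [sq_nonneg ‖x - p - (u - p)‖]

end

theorem stmt_10_general {H : Type*} [NormedAddCommGroup H] [InnerProductSpace ℝ H]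
    (C : Set H)
    (S : H → H)
    (hns : ∀ x ∈ C, ∀ y ∈ C, 2 * ‖S x - S y‖ ^ 2 ≤ ‖S x - y‖ ^ 2 + ‖x - S y‖ ^ 2)
    (δ : ℝ) (hδ : δ ∈ Set.Ioo (0 : ℝ) 1)
    (A : H → H) (hA : ∀ x, A x = (1 - δ) • x + δ • S x) :
    ∀ x ∈ C, ∀ p ∈ C, S p = p →
      ‖A x - p‖ ^ 2 ≤ ‖x - p‖ ^ 2 - (1 - δ) * ‖x - A x‖ ^ 2 := by
  intro x hx p hp hSp
  rw [hA]
  exact norm_one_sub_smul_add_smul_sub_sq_le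
    (norm_sub_fixed_le_of_nonspreading hns hx hp hSp) hδ.1.le

theorem stmt_10 {H : Type*} [NormedAddCommGroup H] [InnerProductSpace ℝ H]
    (C : Set H) (hC : C.Nonempty) (hCc : IsClosed C) (hCv : Convex ℝ C)
    (S : H → H) (hS : Set.MapsTo S C C)
    (hns : ∀ x ∈ C, ∀ y ∈ C, 2 * ‖S x - S y‖ ^ 2 ≤ ‖S x - y‖ ^ 2 + ‖x - S y‖ ^ 2)
    (hFix : ∃ z ∈ C, S z = z)
    (δ : ℝ) (hδ : δ ∈ Set.Ioo (0 : ℝ) 1)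
    (A : H → H) (hA : ∀ x, A x = (1 - δ) • x + δ • S x) :
    ∀ x ∈ C, ∀ p ∈ C, S p = p →
      ‖A x - p‖ ^ 2 ≤ ‖x - p‖ ^ 2 - (1 - δ) * ‖x - A x‖ ^ 2 :=
  stmt_10_general C S hns δ hδ A hA
end

section
/- Let (γₙ) be a real sequence such that there is a subsequence (γ_{n_j}) with γ_{n_j} < γ_{n_j+1} for all j. Then there exists a nondecreasing sequence (m_k) of natural numbers with m_k → ∞ such that for all sufficiently large k: γ_{m_k} ≤ γ_{m_k+1} and γ_k ≤ γ_{m_k+1}. -/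
theorem stmt_13 (γ : ℕ → ℝ) (n : ℕ → ℕ) (hn : StrictMono n)
    (hsub : ∀ j, γ (n j) < γ (n j + 1)) :
    ∃ m : ℕ → ℕ, Monotone m ∧ Filter.Tendsto m Filter.atTop Filter.atTop ∧
      ∀ᶠ k in Filter.atTop, γ (m k) ≤ γ (m k + 1) ∧ γ k ≤ γ (m k + 1) := by
  classical
  set P : ℕ → Prop := fun i => γ i < γ (i + 1) with hP
  refine ⟨fun k => Nat.findGreatest P k, ?_, ?_, ?_⟩
  · exact fun a b hab => Nat.findGreatest_mono_right P hab
  · refine Filter.tendsto_atTop_atTop.2 fun N => ⟨n N, fun k hk => ?_⟩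
    exact le_trans hn.le_apply (Nat.le_findGreatest hk (hsub N))
  · filter_upwards [Filter.eventually_ge_atTop (n 0)] with k hk
    have hspec : P (Nat.findGreatest P k) := Nat.findGreatest_spec hk (hsub 0)
    have hle : Nat.findGreatest P k ≤ k := Nat.findGreatest_le k
    have hchain : ∀ j, Nat.findGreatest P k + 1 ≤ j → j ≤ k →
        γ j ≤ γ (Nat.findGreatest P k + 1) := by
      intro j
      induction j with
      | zero => intro h _; omega
      | succ j ih =>
        intro h1 h2
        rcases Nat.lt_or_ge (Nat.findGreatest P k + 1) (j + 1) with h | h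
        · have hnp : ¬ P j :=
            Nat.findGreatest_is_greatest (P := P) (n := k) (by omega) (by omega)
          have hgj : γ (j + 1) ≤ γ j := not_lt.1 hnp
          exact hgj.trans (ih (by omega) (by omega))
        · have hjeq : j + 1 = Nat.findGreatest P k + 1 := by omega
          rw [hjeq]
    refine ⟨hspec.le, ?_⟩
    rcases eq_or_lt_of_le hle with he | hl
    · have : γ k = γ (Nat.findGreatest P k) := by rw [he]
      rw [this]; exact hspec.le
    · exact hchain k (by omega) le_rfl
end

section
/- Let T be nonexpansive and S nonspreading on C with common fixed point q, δ ∈ (0,1), A_T, A_S the averaged mappings, and Uₙ = βₙA_T + (1−βₙ)A_S with βₙ ∈ [0,1]. Then ‖Uₙx − q‖² ≤ ‖x−q‖² − (1−βₙ)(1−δ)‖x−A_Sx‖² − βₙ(1−βₙ)‖A_Tx−A_Sx‖² for all x ∈ C. -/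
/-! Both averaged maps are quasi-nonexpansive at `q` (a nonspreading map is, by taking `y = q`).
The Hilbert-space identity `‖β a + (1 - β) b‖² = β ‖a‖² + (1 - β) ‖b‖² - β (1 - β) ‖a - b‖²`,
applied once to the averaged step `(1 - δ) x + δ S x` and once to the combination `Uₙ x`,
produces the two negative terms. -/

theorem norm_sub_le_of_nonspreading_of_fixed {E : Type*} [SeminormedAddCommGroup E] {S : E → E}
    {x q : E} (hS : 2 * ‖S x - S q‖ ^ 2 ≤ ‖S x - q‖ ^ 2 + ‖x - S q‖ ^ 2) (hq : S q = q) :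
    ‖S x - q‖ ≤ ‖x - q‖ := by
  rw [hq] at hS
  exact pow_le_pow_iff_left₀ (norm_nonneg _) (norm_nonneg _) two_ne_zero |>.mp (by linarith)

section Averaged

variable {H : Type*} [NormedAddCommGroup H] [InnerProductSpace ℝ H]

theorem norm_smul_add_one_sub_smul_sq (a b : H) (β : ℝ) :
    ‖β • a + (1 - β) • b‖ ^ 2 =
      β * ‖a‖ ^ 2 + (1 - β) * ‖b‖ ^ 2 - β * (1 - β) * ‖a - b‖ ^ 2 := by
  rw [norm_add_sq_real, norm_sub_sq_real, norm_smul, norm_smul, real_inner_smul_left,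
    real_inner_smul_right, mul_pow, mul_pow, Real.norm_eq_abs, Real.norm_eq_abs, sq_abs, sq_abs]
  ring

theorem norm_averaged_sub_sq_le {x y q : H} (hyq : ‖y - q‖ ≤ ‖x - q‖) {δ : ℝ}
    (hδ0 : 0 ≤ δ) (hδ1 : δ ≤ 1) :
    ‖(1 - δ) • x + δ • y - q‖ ^ 2 ≤
      ‖x - q‖ ^ 2 - (1 - δ) * ‖x - ((1 - δ) • x + δ • y)‖ ^ 2 := by
  have hsplit : (1 - δ) • x + δ • y - q = (1 - δ) • (x - q) + (1 - (1 - δ)) • (y - q) := by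
    module
  have hstep : x - ((1 - δ) • x + δ • y) = δ • (x - y) := by module
  have hstep_sq : ‖δ • (x - y)‖ ^ 2 = δ ^ 2 * ‖x - y‖ ^ 2 := by
    rw [norm_smul, mul_pow, Real.norm_eq_abs, sq_abs]
  rw [hsplit, norm_smul_add_one_sub_smul_sq, sub_sub_sub_cancel_right, hstep, hstep_sq]
  have hyq_sq : ‖y - q‖ ^ 2 ≤ ‖x - q‖ ^ 2 := pow_le_pow_left₀ (norm_nonneg _) hyq 2
  have hgain : (1 - δ) * δ ^ 2 * ‖x - y‖ ^ 2 ≤ (1 - δ) * δ * ‖x - y‖ ^ 2 := by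
    gcongr
    nlinarith
  linarith [mul_le_mul_of_nonneg_left hyq_sq (sub_nonneg.mpr hδ0)]

end Averaged

theorem stmt_16_general {H : Type*} [NormedAddCommGroup H] [InnerProductSpace ℝ H]
    (C : Set H)
    (T S : H → H)
    (hne : ∀ x ∈ C, ∀ y ∈ C, ‖T x - T y‖ ≤ ‖x - y‖)
    (hns : ∀ x ∈ C, ∀ y ∈ C, 2 * ‖S x - S y‖ ^ 2 ≤ ‖S x - y‖ ^ 2 + ‖x - S y‖ ^ 2)
    (q : H) (hqC : q ∈ C) (hqT : T q = q) (hqS : S q = q)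
    (δ : ℝ) (hδ : δ ∈ Set.Ioo (0 : ℝ) 1)
    (AT AS : H → H)
    (hAT : ∀ x, AT x = (1 - δ) • x + δ • T x)
    (hAS : ∀ x, AS x = (1 - δ) • x + δ • S x)
    (βn : ℝ) (hβ : βn ∈ Set.Icc (0 : ℝ) 1) :
    ∀ x ∈ C,
      ‖(βn • AT x + (1 - βn) • AS x) - q‖ ^ 2 ≤
        ‖x - q‖ ^ 2 - (1 - βn) * (1 - δ) * ‖x - AS x‖ ^ 2
          - βn * (1 - βn) * ‖AT x - AS x‖ ^ 2 := by
  obtain ⟨hδ0, hδ1⟩ := hδ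
  obtain ⟨hβ0, hβ1⟩ := hβ
  intro x hx
  have hATq : ‖AT x - q‖ ^ 2 ≤ ‖x - q‖ ^ 2 := by
    have hTq : ‖T x - q‖ ≤ ‖x - q‖ := by simpa only [hqT] using hne x hx q hqC
    have := norm_averaged_sub_sq_le hTq hδ0.le hδ1.le
    rw [← hAT] at this
    linarith [mul_nonneg (sub_nonneg.mpr hδ1.le) (sq_nonneg ‖x - AT x‖)]
  have hASq : ‖AS x - q‖ ^ 2 ≤ ‖x - q‖ ^ 2 - (1 - δ) * ‖x - AS x‖ ^ 2 := by
    simpa only [← hAS] using norm_averaged_sub_sq_le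
      (norm_sub_le_of_nonspreading_of_fixed (hns x hx q hqC) hqS) hδ0.le hδ1.le
  have hsplit : βn • AT x + (1 - βn) • AS x - q = βn • (AT x - q) + (1 - βn) • (AS x - q) := by
    module
  rw [hsplit, norm_smul_add_one_sub_smul_sq, sub_sub_sub_cancel_right]
  have hATq' := mul_le_mul_of_nonneg_left hATq hβ0
  have hASq' := mul_le_mul_of_nonneg_left hASq (sub_nonneg.mpr hβ1)
  linarith

theorem stmt_16 {H : Type*} [NormedAddCommGroup H] [InnerProductSpace ℝ H]
    (C : Set H) (hC : C.Nonempty) (hCc : IsClosed C) (hCv : Convex ℝ C)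
    (T S : H → H) (hT : Set.MapsTo T C C) (hS : Set.MapsTo S C C)
    (hne : ∀ x ∈ C, ∀ y ∈ C, ‖T x - T y‖ ≤ ‖x - y‖)
    (hns : ∀ x ∈ C, ∀ y ∈ C, 2 * ‖S x - S y‖ ^ 2 ≤ ‖S x - y‖ ^ 2 + ‖x - S y‖ ^ 2)
    (q : H) (hqC : q ∈ C) (hqT : T q = q) (hqS : S q = q)
    (δ : ℝ) (hδ : δ ∈ Set.Ioo (0 : ℝ) 1)
    (AT AS : H → H)
    (hAT : ∀ x, AT x = (1 - δ) • x + δ • T x)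
    (hAS : ∀ x, AS x = (1 - δ) • x + δ • S x)
    (βn : ℝ) (hβ : βn ∈ Set.Icc (0 : ℝ) 1) :
    ∀ x ∈ C,
      ‖(βn • AT x + (1 - βn) • AS x) - q‖ ^ 2 ≤
        ‖x - q‖ ^ 2 - (1 - βn) * (1 - δ) * ‖x - AS x‖ ^ 2
          - βn * (1 - βn) * ‖AT x - AS x‖ ^ 2 :=
  stmt_16_general C T S hne hns q hqC hqT hqS δ hδ AT AS hAT hAS βn hβ
end
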